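/- arXiv:2604.00976 — 2 statements merged into one kernel-verified Lean document; each statement's English description precedes it below -/
import Mathlib

section
/- Let ψ : [R₁, R₂] → ℝ be a positive C² solution of the radial ODE -(ψ'(r) r^{n-1})' = λ ψ(r) r^{n-1} on (R₁, R₂) with λ > 0, boundary conditions -ψ'(R₁) + β ψ(R₁) = 0 with β > 0, and ψ'(R₂) = 0. Then ψ'(r) > 0 for all r ∈ (R₁, R₂), i.e., ψ is strictly increasing. -/
open Set

/-- Let `ψ` be a positive `C²` solution of the radial eigenvalue ODE
`-(ψ'(r) r^{n-1})' = λ ψ(r) r^{n-1}` on `(R₁,R₂)`, with `λ > 0`, Robin boundary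
condition `-ψ'(R₁) + β ψ(R₁) = 0` (`β > 0`) at the inner radius and Neumann
condition `ψ'(R₂) = 0` at the outer radius. Then `ψ' > 0` on `(R₁,R₂)`, i.e. `ψ`
is strictly increasing. -/
theorem stmt3 (n : ℕ) (hn : 2 ≤ n) (R₁ R₂ lam β : ℝ)
    (hR₁ : 0 < R₁) (hR : R₁ < R₂) (hlam : 0 < lam) (hβ : 0 < β)
    (ψ ψ' : ℝ → ℝ)
    (hC2 : ContDiffOn ℝ 2 ψ (Icc R₁ R₂))
    (hderiv : ∀ r ∈ Icc R₁ R₂, HasDerivWithinAt ψ (ψ' r) (Icc R₁ R₂) r)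
    (hψ'cont : ContinuousOn ψ' (Icc R₁ R₂))
    (hODE : ∀ r ∈ Ioo R₁ R₂,
      HasDerivAt (fun s => ψ' s * s ^ (n - 1)) (-(lam * ψ r * r ^ (n - 1))) r)
    (hpos : ∀ r ∈ Icc R₁ R₂, 0 < ψ r)
    (hBCin : -ψ' R₁ + β * ψ R₁ = 0)
    (hBCout : ψ' R₂ = 0) :
    (∀ r ∈ Ioo R₁ R₂, 0 < ψ' r) ∧ StrictMonoOn ψ (Icc R₁ R₂) := by
  set w : ℝ → ℝ := fun s => ψ' s * s ^ (n - 1) with hw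
  have hwc : ContinuousOn w (Icc R₁ R₂) :=
    hψ'cont.mul ((continuous_pow (n - 1)).continuousOn)
  have hanti : StrictAntiOn w (Icc R₁ R₂) := by
    apply strictAntiOn_of_deriv_neg (convex_Icc _ _) hwc
    intro x hx
    rw [interior_Icc] at hx
    rw [(hODE x hx).deriv]
    have hx0 : 0 < x := hR₁.trans hx.1
    have hψx := hpos x ⟨hx.1.le, hx.2.le⟩
    have hp : 0 < lam * ψ x * x ^ (n - 1) := by positivity
    linarith
  have hw2 : w R₂ = 0 := by simp [hw, hBCout]
  have hψ'pos : ∀ r ∈ Ioo R₁ R₂, 0 < ψ' r := by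
    intro r hr
    have hwr : 0 < w r := by
      have h := hanti ⟨hr.1.le, hr.2.le⟩ (right_mem_Icc.mpr hR.le) hr.2
      rw [hw2] at h
      linarith
    have hr0 : 0 < r := hR₁.trans hr.1
    have hp : 0 < r ^ (n - 1) := pow_pos hr0 _
    have hwr' : 0 < ψ' r * r ^ (n - 1) := hwr
    nlinarith
  refine ⟨hψ'pos, ?_⟩
  apply strictMonoOn_of_deriv_pos (convex_Icc _ _) hC2.continuousOn
  intro x hx
  rw [interior_Icc] at hx
  have hd : HasDerivAt ψ (ψ' x) x :=
    (hderiv x ⟨hx.1.le, hx.2.le⟩).hasDerivAt (Icc_mem_nhds hx.1 hx.2)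
  rw [hd.deriv]
  exact hψ'pos x hx
end

section
/- Let ψ : [R₁, R₂] → ℝ be a positive C² solution of the radial ODE -(ψ'(r) r^{n-1})' = λ ψ(r) r^{n-1} on (R₁, R₂) with λ > 0, boundary conditions -ψ'(R₁) + β_in ψ(R₁) = 0 and ψ'(R₂) + β_out ψ(R₂) = 0 with β_in, β_out > 0. Then there exists ρ ∈ (R₁, R₂) such that ψ is strictly increasing on (R₁, ρ) and strictly decreasing on (ρ, R₂); in particular ψ changes monotonicity exactly once. -/
open Set

/-- Let `ψ` be a positive `C²` solution of the radial eigenvalue ODE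
`-(ψ'(r) r^{n-1})' = λ ψ(r) r^{n-1}` on `(R₁,R₂)`, with `λ > 0` and Robin boundary
conditions `-ψ'(R₁) + β_in ψ(R₁) = 0`, `ψ'(R₂) + β_out ψ(R₂) = 0` with
`β_in, β_out > 0`. Then there is `ρ ∈ (R₁,R₂)` such that `ψ` is strictly
increasing on `[R₁,ρ]` and strictly decreasing on `[ρ,R₂]`: it changes
monotonicity exactly once. -/
theorem stmt4 (n : ℕ) (hn : 2 ≤ n) (R₁ R₂ lam βin βout : ℝ)
    (hR₁ : 0 < R₁) (hR : R₁ < R₂) (hlam : 0 < lam)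
    (hβin : 0 < βin) (hβout : 0 < βout)
    (ψ ψ' : ℝ → ℝ)
    (hC2 : ContDiffOn ℝ 2 ψ (Icc R₁ R₂))
    (hderiv : ∀ r ∈ Icc R₁ R₂, HasDerivWithinAt ψ (ψ' r) (Icc R₁ R₂) r)
    (hψ'cont : ContinuousOn ψ' (Icc R₁ R₂))
    (hODE : ∀ r ∈ Ioo R₁ R₂,
      HasDerivAt (fun s => ψ' s * s ^ (n - 1)) (-(lam * ψ r * r ^ (n - 1))) r)
    (hpos : ∀ r ∈ Icc R₁ R₂, 0 < ψ r)
    (hBCin : -ψ' R₁ + βin * ψ R₁ = 0)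
    (hBCout : ψ' R₂ + βout * ψ R₂ = 0) :
    ∃ ρ ∈ Ioo R₁ R₂, (∀ r ∈ Ioo R₁ ρ, 0 < ψ' r) ∧ (∀ r ∈ Ioo ρ R₂, ψ' r < 0) ∧
      StrictMonoOn ψ (Icc R₁ ρ) ∧ StrictAntiOn ψ (Icc ρ R₂) := by
  set g : ℝ → ℝ := fun s => ψ' s * s ^ (n - 1) with hg
  have hgcont : ContinuousOn g (Icc R₁ R₂) :=
    hψ'cont.mul ((continuous_pow (n - 1)).continuousOn)
  -- g is strictly antitone on [R₁, R₂]
  have hganti : StrictAntiOn g (Icc R₁ R₂) := by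
    apply strictAntiOn_of_deriv_neg (convex_Icc R₁ R₂) hgcont
    intro x hx
    rw [interior_Icc] at hx
    rw [(hODE x hx).deriv]
    have hx0 : 0 < x := hR₁.trans hx.1
    have : 0 < lam * ψ x * x ^ (n - 1) := by
      have := hpos x ⟨hx.1.le, hx.2.le⟩
      positivity
    linarith
  have hxpow : ∀ x : ℝ, 0 < x → (0:ℝ) < x ^ (n - 1) := fun x hx => pow_pos hx _
  have hgR₁ : 0 < g R₁ := by
    have hψR₁ := hpos R₁ ⟨le_refl _, hR.le⟩
    have : ψ' R₁ = βin * ψ R₁ := by linarith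
    simp only [hg, this]
    have := hxpow R₁ hR₁
    positivity
  have hgR₂ : g R₂ < 0 := by
    have hψR₂ := hpos R₂ ⟨hR.le, le_refl _⟩
    have h2 : ψ' R₂ = -(βout * ψ R₂) := by linarith
    simp only [hg, h2]
    have hp := hxpow R₂ (hR₁.trans hR)
    nlinarith [mul_pos (mul_pos hβout hψR₂) hp]
  -- intermediate value: there is ρ with g ρ = 0
  obtain ⟨ρ, hρmem, hρ0⟩ : ∃ ρ ∈ Icc R₁ R₂, g ρ = 0 := by
    have := intermediate_value_Icc' hR.le hgcont (a := R₁) (b := R₂)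
    have h0 : (0:ℝ) ∈ Icc (g R₂) (g R₁) := ⟨hgR₂.le, hgR₁.le⟩
    obtain ⟨ρ, hρ, hgρ⟩ := this h0
    exact ⟨ρ, hρ, hgρ⟩
  have hρI : ρ ∈ Ioo R₁ R₂ := by
    rcases hρmem.1.lt_or_eq with h1 | h1
    · rcases hρmem.2.lt_or_eq with h2 | h2
      · exact ⟨h1, h2⟩
      · exact absurd hρ0 (by rw [h2]; exact hgR₂.ne)
    · exact absurd hρ0 (by rw [← h1]; exact hgR₁.ne')
  have hpos' : ∀ r ∈ Ioo R₁ ρ, 0 < ψ' r := by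
    intro r hr
    have hrI : r ∈ Icc R₁ R₂ := ⟨hr.1.le, (hr.2.trans hρI.2).le⟩
    have hgr : 0 < g r := by
      have := hganti hrI ⟨hρI.1.le, hρI.2.le⟩ hr.2
      rwa [hρ0] at this
    have hr0 : 0 < r := hR₁.trans hr.1
    have hp := hxpow r hr0
    by_contra h
    push_neg at h
    have : g r ≤ 0 := mul_nonpos_of_nonpos_of_nonneg h hp.le
    linarith
  have hneg' : ∀ r ∈ Ioo ρ R₂, ψ' r < 0 := by
    intro r hr
    have hrI : r ∈ Icc R₁ R₂ := ⟨(hρI.1.trans hr.1).le, hr.2.le⟩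
    have hgr : g r < 0 := by
      have := hganti ⟨hρI.1.le, hρI.2.le⟩ hrI hr.1
      rwa [hρ0] at this
    have hr0 : 0 < r := hR₁.trans (hρI.1.trans hr.1)
    have hp := hxpow r hr0
    by_contra h
    push_neg at h
    have : 0 ≤ g r := mul_nonneg h hp.le
    linarith
  -- derivative of ψ at interior points
  have hderiv' : ∀ x ∈ Ioo R₁ R₂, deriv ψ x = ψ' x := by
    intro x hx
    have : HasDerivAt ψ (ψ' x) x :=
      (hderiv x ⟨hx.1.le, hx.2.le⟩).hasDerivAt (Icc_mem_nhds hx.1 hx.2)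
    exact this.deriv
  refine ⟨ρ, hρI, hpos', hneg', ?_, ?_⟩
  · apply strictMonoOn_of_deriv_pos (convex_Icc R₁ ρ)
      (hC2.continuousOn.mono (Icc_subset_Icc le_rfl hρI.2.le))
    intro x hx
    rw [interior_Icc] at hx
    rw [hderiv' x ⟨hx.1, hx.2.trans hρI.2⟩]
    exact hpos' x hx
  · apply strictAntiOn_of_deriv_neg (convex_Icc ρ R₂)
      (hC2.continuousOn.mono (Icc_subset_Icc hρI.1.le le_rfl))
    intro x hx
    rw [interior_Icc] at hx
    rw [hderiv' x ⟨hρI.1.trans hx.1, hx.2⟩]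
    exact hneg' x hx
end
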